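/- arXiv:1307.3280 — 2 statements merged into one kernel-verified Lean document; each statement's English description precedes it below -/
import Mathlib

section
/- The formal power series f(r) in the variables r satisfying the tree recursion f = r·ζ₂ − Σ_{k≥2} f^k·f̂^{k−1} + ζ₂·Σ_{k≥2} r^k·f̂^{k−1} and f̂ = r·ζ₁ − Σ_{k≥2} f̂^k·f^{k−1} + ζ₁·Σ_{k≥2} r^k·f^{k−1} satisfy f/(1−f·f̂) = r·ζ₂/(1−r·f̂) and f̂/(1−f·f̂) = r·ζ₁/(1−r·f). -/
/-!
Moving the `f²f̂/(1 - f f̂)` term to the left, the recursion for `f` reads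
`f + f²f̂/(1 - f f̂) = ζ₂ r + ζ₂ r²f̂/(1 - r f̂)`: both sides are geometric sums
`Σ_{k≥1} aᵏ bᵏ⁻¹ = a/(1 - ab)`, with `(a, b) = (f, f̂)` and `(r, f̂)`.
The recursion for `f̂` is the same with `f` and `f̂` exchanged.
-/

open PowerSeries

theorem PowerSeries.mul_inv_one_sub_mul_eq {k : Type*} [Field k] (a b : k⟦X⟧)
    (h : constantCoeff (1 - a * b) ≠ 0) :
    a * (1 - a * b)⁻¹ = a + a ^ 2 * b * (1 - a * b)⁻¹ := by
  linear_combination a * PowerSeries.mul_inv_cancel _ h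

theorem PowerSeries.mul_inv_eq_of_tree_recursion {k : Type*} [Field k] (c : k)
    (f g : k⟦X⟧) (hf0 : constantCoeff f = 0)
    (hf : f = C c * X - f ^ 2 * g * (1 - f * g)⁻¹ + C c * (X ^ 2 * g * (1 - X * g)⁻¹)) :
    f * (1 - f * g)⁻¹ = C c * X * (1 - X * g)⁻¹ := by
  have hfg : constantCoeff (1 - f * g) ≠ 0 := by simp [hf0]
  have hXg : constantCoeff (1 - X * g) ≠ 0 := by simp
  rw [mul_inv_one_sub_mul_eq f g hfg, mul_assoc (C c), mul_inv_one_sub_mul_eq X g hXg]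
  linear_combination hf

theorem tree_recursion_simplification_general (ζ₁ ζ₂ : ℝ)
    (f fh : PowerSeries ℝ)
    (hf0 : constantCoeff f = 0) (hfh0 : constantCoeff fh = 0)
    (hf : f = C ζ₂ * X - f ^ 2 * fh * (1 - f * fh)⁻¹
          + C ζ₂ * (X ^ 2 * fh * (1 - X * fh)⁻¹))
    (hfh : fh = C ζ₁ * X - fh ^ 2 * f * (1 - f * fh)⁻¹
          + C ζ₁ * (X ^ 2 * f * (1 - X * f)⁻¹)) :
    f * (1 - f * fh)⁻¹ = C ζ₂ * X * (1 - X * fh)⁻¹ ∧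
    fh * (1 - f * fh)⁻¹ = C ζ₁ * X * (1 - X * f)⁻¹ := by
  refine ⟨mul_inv_eq_of_tree_recursion ζ₂ f fh hf0 hf, ?_⟩
  rw [mul_comm f fh] at hfh ⊢
  exact mul_inv_eq_of_tree_recursion ζ₁ fh f hfh0 hfh

/-- The tree recursions `f = rζ₂ − Σ_{k≥2} f^k f̂^{k−1} + ζ₂ Σ_{k≥2} r^k f̂^{k−1}` and
`f̂ = rζ₁ − Σ_{k≥2} f̂^k f^{k−1} + ζ₁ Σ_{k≥2} r^k f^{k−1}` (with the geometric series
summed in closed form) imply `f/(1−f f̂) = rζ₂/(1−r f̂)` and `f̂/(1−f f̂) = rζ₁/(1−r f)`. -/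
theorem tree_recursion_simplification (ζ₁ ζ₂ : ℝ) (hζ : ζ₁ + ζ₂ = 1)
    (f fh : PowerSeries ℝ)
    (hf0 : constantCoeff f = 0) (hfh0 : constantCoeff fh = 0)
    (hf : f = C ζ₂ * X - f ^ 2 * fh * (1 - f * fh)⁻¹
          + C ζ₂ * (X ^ 2 * fh * (1 - X * fh)⁻¹))
    (hfh : fh = C ζ₁ * X - fh ^ 2 * f * (1 - f * fh)⁻¹
          + C ζ₁ * (X ^ 2 * f * (1 - X * f)⁻¹)) :
    f * (1 - f * fh)⁻¹ = C ζ₂ * X * (1 - X * fh)⁻¹ ∧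
    fh * (1 - f * fh)⁻¹ = C ζ₁ * X * (1 - X * f)⁻¹ :=
  tree_recursion_simplification_general ζ₁ ζ₂ f fh hf0 hfh0 hf hfh
end

section
/- If f and f̂ are formal power series with zero constant term satisfying f/(1−f·f̂) = r·ζ₂/(1−r·f̂) and f̂/(1−f·f̂) = r·ζ₁/(1−r·f), with ζ₁+ζ₂=1, then h := f·f̂ satisfies the quadratic equation s·ξ·h² + (s − 2sξ − 1)·h + s·ξ = 0, where s = r² and ξ = ζ₁ζ₂. -/
/-!
Clearing denominators, the two equations read `f - r h = ζ₂ r (1 - h)` and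
`f̂ - r h = ζ₁ r (1 - h)`, i.e. `f = r (h + ζ₂ (1 - h))` and `f̂ = r (h + ζ₁ (1 - h))`.
Multiplying them gives `h = s (h + ζ₁ ζ₂ (1 - h)²)` once `ζ₁ + ζ₂ = 1` is used, which is the
quadratic equation.
-/

open PowerSeries

theorem PowerSeries.mul_inv_eq_mul_inv_iff {k : Type*} [Field k] {a b φ ψ : k⟦X⟧}
    (hφ : constantCoeff φ ≠ 0) (hψ : constantCoeff ψ ≠ 0) :
    a * φ⁻¹ = b * ψ⁻¹ ↔ a * ψ = b * φ := by
  have hφ' := PowerSeries.mul_inv_cancel φ hφ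
  have hψ' := PowerSeries.mul_inv_cancel ψ hψ
  constructor
  · intro h
    linear_combination (φ * ψ) * h - (a * ψ) * hφ' + (b * φ) * hψ'
  · intro h
    linear_combination (φ⁻¹ * ψ⁻¹) * h - (a * φ⁻¹) * hψ' + (b * ψ⁻¹) * hφ'

theorem quadratic_of_mul_one_sub {R : Type*} [CommRing R] {r c₁ c₂ f g : R}
    (hc : c₁ + c₂ = 1)
    (hf : f * (1 - r * g) = c₂ * r * (1 - f * g))
    (hg : g * (1 - r * f) = c₁ * r * (1 - f * g)) :
    c₁ * c₂ * r ^ 2 * (f * g) ^ 2 + (r ^ 2 - 2 * (c₁ * c₂) * r ^ 2 - 1) * (f * g)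
      + c₁ * c₂ * r ^ 2 = 0 := by
  have hf' : f = r * (f * g + c₂ * (1 - f * g)) := by linear_combination hf
  have hg' : g = r * (f * g + c₁ * (1 - f * g)) := by linear_combination hg
  have hfg : f * g = r ^ 2 * (f * g + c₂ * (1 - f * g)) * (f * g + c₁ * (1 - f * g)) := by
    linear_combination g * hf' + r * (f * g + c₂ * (1 - f * g)) * hg'
  linear_combination -hfg - r ^ 2 * (f * g) * (1 - f * g) * hc

theorem h_quadratic_general (ζ₁ ζ₂ : ℝ) (hζ : ζ₁ + ζ₂ = 1)
    (f fh : PowerSeries ℝ)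
    (hf0 : constantCoeff f = 0)
    (h1 : f * (1 - f * fh)⁻¹ = C ζ₂ * X * (1 - X * fh)⁻¹)
    (h2 : fh * (1 - f * fh)⁻¹ = C ζ₁ * X * (1 - X * f)⁻¹) :
    C (ζ₁ * ζ₂) * X ^ 2 * (f * fh) ^ 2
      + (X ^ 2 - 2 * C (ζ₁ * ζ₂) * X ^ 2 - 1) * (f * fh)
      + C (ζ₁ * ζ₂) * X ^ 2 = 0 := by
  have hden : constantCoeff (1 - f * fh) ≠ 0 := by simp [hf0]
  have e1 : f * (1 - X * fh) = C ζ₂ * X * (1 - f * fh) :=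
    (PowerSeries.mul_inv_eq_mul_inv_iff hden (by simp)).mp h1
  have e2 : fh * (1 - X * f) = C ζ₁ * X * (1 - f * fh) :=
    (PowerSeries.mul_inv_eq_mul_inv_iff hden (by simp)).mp h2
  have hC : C ζ₁ + C ζ₂ = 1 := by rw [← map_add, hζ, map_one]
  rw [map_mul]
  exact quadratic_of_mul_one_sub hC e1 e2

/-- If `f/(1−f f̂) = rζ₂/(1−r f̂)` and `f̂/(1−f f̂) = rζ₁/(1−r f)` with `ζ₁+ζ₂ = 1`,
then `h = f f̂` satisfies `sξh² + (s − 2sξ − 1)h + sξ = 0` where `s = r²`, `ξ = ζ₁ζ₂`. -/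
theorem h_quadratic (ζ₁ ζ₂ : ℝ) (hζ : ζ₁ + ζ₂ = 1)
    (f fh : PowerSeries ℝ)
    (hf0 : constantCoeff f = 0) (hfh0 : constantCoeff fh = 0)
    (h1 : f * (1 - f * fh)⁻¹ = C ζ₂ * X * (1 - X * fh)⁻¹)
    (h2 : fh * (1 - f * fh)⁻¹ = C ζ₁ * X * (1 - X * f)⁻¹) :
    C (ζ₁ * ζ₂) * X ^ 2 * (f * fh) ^ 2
      + (X ^ 2 - 2 * C (ζ₁ * ζ₂) * X ^ 2 - 1) * (f * fh)
      + C (ζ₁ * ζ₂) * X ^ 2 = 0 :=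
  h_quadratic_general ζ₁ ζ₂ hζ f fh hf0 h1 h2
end
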